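/- arXiv:2504.01354 — 4 statements merged into one kernel-verified Lean document; each statement's English description precedes it below -/
import Mathlib

section
/- Let (T,β) be a tree decomposition of a finite simple graph G, let r be a fixed root of T, and let a and b be two distinct children of a node t (with respect to the root r) such that β(a) ∩ β(t) = β(b) ∩ β(t). Let T' be the graph obtained from T by deleting the edge bt and adding the edge ab. Then T' is a tree and (T',β) is a tree decomposition of G. -/
/-!
Since `bt` is a bridge of the tree, `a` and `b` lie in different components of `T - bt`, so
adding `ab` creates no cycle, and `T'` stays connected because `b a t` replaces the deleted edge.
The same path keeps each subtree `{x | v ∈ β(x)}` connected: if it contains `b` and `t`, it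
contains `a`, because `β(a) ∩ β(t) = β(b) ∩ β(t)`.
-/

open SimpleGraph

/-- A tree decomposition of a finite simple graph `G` with tree `Tg`. -/
structure TreeDecomp {V T : Type} [Fintype V] [Fintype T]
    (G : SimpleGraph V) (Tg : SimpleGraph T) where
  /-- the underlying tree is indeed a tree -/
  isTree : Tg.IsTree
  /-- the bag of each node -/
  bag : T → Finset V
  /-- every vertex lies in some bag -/
  mem_bag : ∀ v : V, ∃ t : T, v ∈ bag t
  /-- every edge of `G` is contained in some bag -/
  edge_bag : ∀ u v : V, G.Adj u v → ∃ t : T, u ∈ bag t ∧ v ∈ bag t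
  /-- the set of nodes whose bag contains a given vertex induces a subtree -/
  bag_connected : ∀ v : V, (Tg.induce {t : T | v ∈ bag t}).Connected

/-- The width of a tree decomposition: maximal bag size minus one. -/
def TreeDecomp.width {V T : Type} [Fintype V] [Fintype T]
    {G : SimpleGraph V} {Tg : SimpleGraph T} (td : TreeDecomp G Tg) : ℕ :=
  (Finset.univ.sup fun t : T => (td.bag t).card) - 1

/-- The graph obtained from `Tg` by deleting the edge `bt` and adding the
edge `ab`. -/
def rewire {T : Type} (Tg : SimpleGraph T) (t a b : T) : SimpleGraph T :=
  SimpleGraph.fromEdgeSet ((Tg.edgeSet \ {s(b, t)}) ∪ {s(a, b)})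

namespace SimpleGraph

variable {V : Type*} {G G' : SimpleGraph V}

theorem Connected.of_forall_adj_reachable (hG : G.Connected)
    (h : ∀ ⦃u v⦄, G.Adj u v → G'.Reachable u v) : G'.Connected := by
  have := hG.nonempty
  refine ⟨fun u v => ?_⟩
  obtain ⟨p⟩ := hG.preconnected u v
  induction p with
  | nil => rfl
  | cons hadj _ ih => exact (h hadj).trans ih

end SimpleGraph

section Rewire

variable {T : Type} {Tg : SimpleGraph T} {t a b : T}

theorem rewire_eq (Tg : SimpleGraph T) (t a b : T) :
    rewire Tg t a b = Tg.deleteEdges {s(b, t)} ⊔ edge a b := by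
  ext u w
  simp only [rewire, fromEdgeSet_adj, Set.mem_union, Set.mem_sdiff, mem_edgeSet,
    Set.mem_singleton_iff, sup_adj, deleteEdges_adj, edge_adj, Sym2.eq_iff]
  grind [Adj.ne]

theorem rewire_adj_of_adj {u w : T} (h : Tg.Adj u w) (hne : s(u, w) ≠ s(b, t)) :
    (rewire Tg t a b).Adj u w := by
  rw [rewire_eq]
  exact Or.inl (deleteEdges_adj.2 ⟨h, hne⟩)

theorem rewire_adj_ab (hab : a ≠ b) : (rewire Tg t a b).Adj a b := by
  rw [rewire_eq]
  exact Or.inr ((edge_adj _ _ _ _).2 ⟨Or.inl ⟨rfl, rfl⟩, hab⟩)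

theorem rewire_adj_ta (hab : a ≠ b) (hta : Tg.Adj t a) :
    (rewire Tg t a b).Adj t a :=
  rewire_adj_of_adj hta fun h => by grind [Sym2.eq_iff, hta.ne]

theorem rewire_induce_connected (hab : a ≠ b) (hta : Tg.Adj t a) {S : Set T}
    (hS : b ∈ S → t ∈ S → a ∈ S) (hc : (Tg.induce S).Connected) :
    ((rewire Tg t a b).induce S).Connected := by
  refine hc.of_forall_adj_reachable ?_
  rintro ⟨u, hu⟩ ⟨w, hw⟩ huw
  by_cases hbt : s(u, w) = s(b, t)
  · have hpath : ∀ (hb : b ∈ S) (ht : t ∈ S),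
        ((rewire Tg t a b).induce S).Reachable ⟨b, hb⟩ ⟨t, ht⟩ := fun hb ht =>
      have ha := hS hb ht
      have hba : ((rewire Tg t a b).induce S).Adj ⟨b, hb⟩ ⟨a, ha⟩ :=
        (rewire_adj_ab hab).symm
      have hat : ((rewire Tg t a b).induce S).Adj ⟨a, ha⟩ ⟨t, ht⟩ :=
        (rewire_adj_ta hab hta).symm
      hba.reachable.trans hat.reachable
    rcases Sym2.eq_iff.1 hbt with ⟨rfl, rfl⟩ | ⟨rfl, rfl⟩
    · exact hpath hu hw
    · exact (hpath hw hu).symm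
  · exact Adj.reachable (G := (rewire Tg t a b).induce S) (rewire_adj_of_adj huw hbt)

theorem rewire_connected (hab : a ≠ b) (hta : Tg.Adj t a) (hc : Tg.Connected) :
    (rewire Tg t a b).Connected :=
  (induceUnivIso _).connected_iff.1 <|
    rewire_induce_connected hab hta (fun _ _ => Set.mem_univ a)
      ((induceUnivIso Tg).connected_iff.2 hc)

theorem rewire_isAcyclic (hab : a ≠ b) (hta : Tg.Adj t a) (htb : Tg.Adj t b)
    (hT : Tg.IsAcyclic) : (rewire Tg t a b).IsAcyclic := by
  rw [rewire_eq]
  refine (hT.anti (deleteEdges_le _)).sup_edge_of_not_reachable fun hreach => ?_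
  have hbt : ¬(Tg.deleteEdges {s(b, t)}).Reachable b t :=
    isAcyclic_iff_forall_adj_isBridge.mp hT htb.symm
  have hta' : (Tg.deleteEdges {s(b, t)}).Adj t a :=
    deleteEdges_adj.2 ⟨hta, fun h => by grind [Sym2.eq_iff, hta.ne]⟩
  exact hbt (hreach.symm.trans hta'.symm.reachable)

theorem rewire_isTree (hab : a ≠ b) (hta : Tg.Adj t a) (htb : Tg.Adj t b) (hT : Tg.IsTree) :
    (rewire Tg t a b).IsTree :=
  ⟨rewire_connected hab hta hT.connected, rewire_isAcyclic hab hta htb hT.isAcyclic⟩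

end Rewire

theorem rewire_treeDecomp_general {V T : Type} [Fintype V] [Fintype T] [DecidableEq V]
    (G : SimpleGraph V) (Tg : SimpleGraph T) (td : TreeDecomp G Tg)
    (t a b : T) (hab : a ≠ b)
    (ha_adj : Tg.Adj t a)
    (hb_adj : Tg.Adj t b)
    (hnavel : td.bag a ∩ td.bag t = td.bag b ∩ td.bag t) :
    ∃ td' : TreeDecomp G (rewire Tg t a b), td'.bag = td.bag := by
  refine ⟨⟨rewire_isTree hab ha_adj hb_adj td.isTree, td.bag, td.mem_bag, td.edge_bag,
    fun v => rewire_induce_connected hab ha_adj ?_ (td.bag_connected v)⟩, rfl⟩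
  intro hb ht
  have : v ∈ td.bag a ∩ td.bag t := hnavel ▸ Finset.mem_inter.2 ⟨hb, ht⟩
  exact (Finset.mem_inter.1 this).1

/-- If `a` and `b` are distinct children of a node `t` (with respect to a root
`r`) with the same navel `β(a) ∩ β(t) = β(b) ∩ β(t)`, then deleting the tree
edge `bt` and adding the edge `ab` yields again a tree decomposition of `G`
(on a tree). -/
theorem rewire_treeDecomp {V T : Type} [Fintype V] [Fintype T] [DecidableEq V]
    (G : SimpleGraph V) (Tg : SimpleGraph T) (td : TreeDecomp G Tg)
    (r t a b : T) (hab : a ≠ b)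
    (ha_adj : Tg.Adj t a) (ha_child : Tg.dist r a = Tg.dist r t + 1)
    (hb_adj : Tg.Adj t b) (hb_child : Tg.dist r b = Tg.dist r t + 1)
    (hnavel : td.bag a ∩ td.bag t = td.bag b ∩ td.bag t) :
    ∃ td' : TreeDecomp G (rewire Tg t a b), td'.bag = td.bag :=
  rewire_treeDecomp_general G Tg td t a b hab ha_adj hb_adj hnavel
end

section
/- Let (T,β) be a tree decomposition of a finite simple graph G and let r be a node of T. Then there exists a tree T' on the same node set as T such that (T',β) is a tree decomposition of G (hence of the same width, since the bags are unchanged) and, rooting T' at r, for every node t of T' no two distinct children a, b of t satisfy β(a) ∩ β(t) = β(b) ∩ β(t). -/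
/-!
Root the tree at `r` and record it by parent pointers. If two children `a ≠ b` of a node have
the same navel, re-hang `b`, together with everything below it, under `a`: a vertex of `bag b`
that also lies in the bag of `b`'s old parent lies in the navel of `b`, hence in `bag a`, so the
bags containing any given vertex still form a subtree. Re-hanging strictly increases the sum of
the depths, which is less than `|T|²`, so the process stops, at a tree with distinct navels.
-/

open SimpleGraph

namespace SimpleGraph.IsTree

variable {V : Type*} {G : SimpleGraph V}

theorem eq_of_adj_of_dist_add_one (hG : G.IsTree) {r t u u' : V} (hu : G.Adj u t)
    (hu' : G.Adj u' t) (hd : G.dist r u + 1 = G.dist r t) (hd' : G.dist r u' + 1 = G.dist r t) :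
    u = u' := by
  obtain ⟨p, -, hp⟩ := hG.connected.exists_path_of_dist r u
  obtain ⟨p', -, hp'⟩ := hG.connected.exists_path_of_dist r u'
  have h : (p.concat hu).IsPath := (p.concat hu).isPath_of_length_eq_dist (by simp [hp, hd])
  have h' : (p'.concat hu').IsPath := (p'.concat hu').isPath_of_length_eq_dist (by simp [hp', hd'])
  exact (Walk.concat_inj ((hG.existsUnique_path r t).unique h h')).1

theorem exists_adj_dist_add_one (hG : G.IsTree) {r t : V} (ht : t ≠ r) :
    ∃ u, G.Adj u t ∧ G.dist r u + 1 = G.dist r t := by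
  obtain ⟨p, -, hp⟩ := hG.connected.exists_path_of_dist t r
  cases p with
  | nil => exact absurd rfl ht
  | cons h q =>
    refine ⟨_, h.symm, ?_⟩
    rw [Walk.length_cons, dist_comm] at hp
    have hq := dist_le q
    rw [dist_comm] at hq
    rcases hG.dist_eq_dist_add_one_of_adj r h with h' | h' <;> omega

theorem exists_parent_fun (hG : G.IsTree) (r : V) :
    ∃ p : V → V, p r = r ∧ ∀ t ≠ r, G.Adj (p t) t ∧ G.dist r (p t) + 1 = G.dist r t := by
  classical
  choose p hp using fun t : {t // t ≠ r} => hG.exists_adj_dist_add_one t.2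
  exact ⟨fun t => if h : t = r then r else p ⟨t, h⟩, by simp,
    fun t ht => by simpa [ht] using hp ⟨t, ht⟩⟩

theorem dist_snd_add_one (hG : G.IsTree) (r : V) {t s : V} (q : G.Walk t s) (hq : q.IsPath)
    (hts : t ≠ s) (hmin : ∀ x ∈ q.support, G.dist r s ≤ G.dist r x) :
    G.dist r q.snd + 1 = G.dist r t := by
  induction q with
  | nil => exact absurd rfl hts
  | @cons t u s h q ih =>
    rw [Walk.snd_cons]
    rcases hG.dist_eq_dist_add_one_of_adj r h with hd | hd
    · exact hd.symm
    have hus : u ≠ s := by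
      rintro rfl
      have := hmin t (by simp)
      omega
    rw [Walk.cons_isPath_iff] at hq
    have hq' := ih hq.1 hus fun x hx => hmin x (by simp [hx])
    -- an up-step followed by a down-step would return to `t`
    have htq : t = q.snd := hG.eq_of_adj_of_dist_add_one h (q.adj_snd (Walk.not_nil_of_ne hus)).symm
      hd.symm hq'
    exact absurd (htq ▸ q.getVert_mem_support 1) hq.2

theorem mem_of_adj_of_dist_add_one (hG : G.IsTree) {S : Set V} (hS : (G.induce S).Connected)
    {r s t u : V} (hs : s ∈ S) (hmin : ∀ x ∈ S, G.dist r s ≤ G.dist r x) (ht : t ∈ S) (hts : t ≠ s)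
    (hu : G.Adj u t) (hd : G.dist r u + 1 = G.dist r t) : u ∈ S := by
  classical
  obtain ⟨w⟩ := hS.preconnected ⟨t, ht⟩ ⟨s, hs⟩
  set q := (w.map (Embedding.induce S).toHom).bypass
  have hqS : ∀ x ∈ q.support, x ∈ S := fun x hx => by
    obtain ⟨y, -, rfl⟩ := List.mem_map.mp
      (Walk.support_map _ w ▸ Walk.support_bypass_subset_support _ hx)
    exact y.2
  have hsnd := hG.dist_snd_add_one r q (Walk.bypass_isPath _) hts
    fun x hx => hmin x (hqS x hx)
  rw [hG.eq_of_adj_of_dist_add_one hu (q.adj_snd (Walk.not_nil_of_ne hts)).symm hd hsnd]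
  exact hqS _ (q.getVert_mem_support 1)

end SimpleGraph.IsTree

/-- A tree on `T` rooted at `r`, given by parent pointers; `depth` certifies that following
parents from any node reaches the root. -/
structure ParentTree (T : Type*) (r : T) where
  parent : T → T
  depth : T → ℕ
  parent_root : parent r = r
  depth_root : depth r = 0
  depth_eq : ∀ t ≠ r, depth t = depth (parent t) + 1

namespace ParentTree

variable {T : Type*} {r : T} (R : ParentTree T r)

lemma eq_root_of_depth_eq_zero {t : T} (h : R.depth t = 0) : t = r := by
  by_contra ht
  have := R.depth_eq t ht
  omega

lemma parent_ne {t : T} (ht : t ≠ r) : R.parent t ≠ t := by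
  intro h
  have := R.depth_eq t ht
  rw [h] at this
  omega

def IsAncestor (b s : T) : Prop := ∃ n, R.parent^[n] s = b

lemma isAncestor_self (b : T) : R.IsAncestor b b := ⟨0, rfl⟩

lemma not_isAncestor_root {b : T} (hb : b ≠ r) : ¬ R.IsAncestor b r := by
  rintro ⟨n, hn⟩
  rw [Function.iterate_fixed R.parent_root] at hn
  exact hb hn.symm

lemma isAncestor_parent_iff {b s : T} (hsb : s ≠ b) :
    R.IsAncestor b (R.parent s) ↔ R.IsAncestor b s := by
  constructor
  · rintro ⟨n, hn⟩
    exact ⟨n + 1, hn⟩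
  · rintro ⟨_ | n, hn⟩
    · exact absurd hn hsb
    · exact ⟨n, hn⟩

lemma depth_lt_of_isAncestor {b s : T} (h : R.IsAncestor b s) (hsb : s ≠ b) :
    R.depth b < R.depth s := by
  obtain ⟨n, hn⟩ := h
  induction n generalizing s with
  | zero => exact absurd hn hsb
  | succ n ih =>
    have hsr : s ≠ r := by
      rintro rfl
      exact R.not_isAncestor_root (fun h => hsb h.symm) ⟨n + 1, hn⟩
    rw [R.depth_eq s hsr]
    by_cases hpb : R.parent s = b
    · rw [hpb]
      omega
    · have := ih hpb hn
      omega

lemma depth_lt_card [Fintype T] (t : T) : R.depth t < Fintype.card T := by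
  have hdepth : ∀ i ≤ R.depth t, R.depth (R.parent^[i] t) + i = R.depth t := by
    intro i hi
    induction i with
    | zero => rfl
    | succ i ih =>
      have ih := ih (by omega)
      have hne : R.parent^[i] t ≠ r := fun h => by
        rw [h, R.depth_root] at ih
        omega
      rw [Function.iterate_succ_apply', ← ih, R.depth_eq _ hne]
      omega
  have hinj : Function.Injective fun i : Fin (R.depth t + 1) => R.parent^[i] t := by
    intro i j hij
    have hi := hdepth i (by omega)
    have hj := hdepth j (by omega)
    simp only at hij
    rw [hij] at hi
    exact Fin.ext (by omega)
  simpa using Fintype.card_le_of_injective _ hinj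

def graph : SimpleGraph T := fromRel fun x y => R.parent x = y

lemma graph_adj {x y : T} : R.graph.Adj x y ↔ x ≠ y ∧ (R.parent x = y ∨ R.parent y = x) :=
  fromRel_adj _ x y

lemma adj_parent {t : T} (ht : t ≠ r) : R.graph.Adj t (R.parent t) :=
  R.graph_adj.mpr ⟨(R.parent_ne ht).symm, Or.inl rfl⟩

lemma ne_root_and_depth_eq_of_adj {x y : T} (h : R.graph.Adj x y) (hxy : R.parent x = y) :
    x ≠ r ∧ R.depth x = R.depth y + 1 := by
  have hx : x ≠ r := by
    rintro rfl
    exact (R.graph_adj.mp h).1 (R.parent_root ▸ hxy)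
  exact ⟨hx, hxy ▸ R.depth_eq x hx⟩

lemma depth_le_of_adj {x y : T} (h : R.graph.Adj x y) : R.depth y ≤ R.depth x + 1 := by
  rcases (R.graph_adj.mp h).2 with hxy | hyx
  · have := (R.ne_root_and_depth_eq_of_adj h hxy).2
    omega
  · have := (R.ne_root_and_depth_eq_of_adj h.symm hyx).2
    omega

lemma parent_eq_of_adj_of_depth_lt {x y : T} (h : R.graph.Adj x y)
    (hd : R.depth x < R.depth y) : R.parent y = x := by
  refine (R.graph_adj.mp h).2.resolve_left fun hxy => ?_
  have := (R.ne_root_and_depth_eq_of_adj h hxy).2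
  omega

lemma depth_le_length {x y : T} (w : R.graph.Walk x y) : R.depth y ≤ R.depth x + w.length := by
  induction w with
  | nil => simp
  | cons h w ih =>
    have := R.depth_le_of_adj h
    rw [Walk.length_cons]
    omega

lemma exists_walk_length_eq_depth (t : T) : ∃ w : R.graph.Walk r t, w.length = R.depth t := by
  induction hd : R.depth t generalizing t with
  | zero => exact ⟨.copy .nil rfl (R.eq_root_of_depth_eq_zero hd).symm, by simp⟩
  | succ n ih =>
    have ht : t ≠ r := by
      rintro rfl
      rw [R.depth_root] at hd
      omega
    obtain ⟨w, hw⟩ := ih (R.parent t) (by have := R.depth_eq t ht; omega)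
    exact ⟨w.concat (R.adj_parent ht).symm, by rw [Walk.length_concat, hw]⟩

lemma dist_eq_depth (t : T) : R.graph.dist r t = R.depth t := by
  obtain ⟨w, hw⟩ := R.exists_walk_length_eq_depth t
  obtain ⟨w', hw'⟩ := w.reachable.exists_walk_length_eq_dist
  have := R.depth_le_length w'
  have := dist_le w
  rw [R.depth_root] at *
  omega

lemma connected : R.graph.Connected :=
  (connected_iff_exists_forall_reachable _).mpr
    ⟨r, fun t => (R.exists_walk_length_eq_depth t).elim fun w _ => w.reachable⟩

lemma nat_card_edgeSet : Nat.card R.graph.edgeSet = Nat.card {t // t ≠ r} := by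
  refine (Nat.card_eq_of_bijective
    (fun t => ⟨s(t.1, R.parent t.1), R.adj_parent t.2⟩) ⟨?_, ?_⟩).symm
  · rintro ⟨a, ha⟩ ⟨b, hb⟩ hab
    rcases Sym2.eq_iff.mp (Subtype.ext_iff.mp hab) with ⟨h, -⟩ | ⟨hab, hba⟩
    · exact Subtype.ext h
    · dsimp only at hab hba
      have ha' := R.depth_eq a ha
      have hb' := R.depth_eq b hb
      rw [hba] at ha'
      rw [← hab] at hb'
      omega
  · rintro ⟨e, he⟩
    induction e with
    | _ x y =>
      rcases (R.graph_adj.mp he).2 with hxy | hyx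
      · exact ⟨⟨x, (R.ne_root_and_depth_eq_of_adj he hxy).1⟩, by simp [hxy]⟩
      · exact ⟨⟨y, (R.ne_root_and_depth_eq_of_adj he.symm hyx).1⟩, by simp [hyx, Sym2.eq_swap]⟩

lemma isTree [Finite T] : R.graph.IsTree := by
  classical
  have := Fintype.ofFinite T
  have : Nonempty T := ⟨r⟩
  refine isTree_iff_connected_and_card.mpr ⟨R.connected, ?_⟩
  rw [R.nat_card_edgeSet]
  simp [Nat.card_eq_fintype_card, Fintype.card_subtype_compl, Nat.sub_add_cancel Fintype.card_pos]

def IsSubtreeWithTop (S : Set T) (s : T) : Prop :=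
  s ∈ S ∧ ∀ t ∈ S, t ≠ s → t ≠ r ∧ R.parent t ∈ S

lemma IsSubtreeWithTop.induce_connected {S : Set T} {s : T} (h : R.IsSubtreeWithTop S s) :
    (R.graph.induce S).Connected := by
  have hreach : ∀ t (ht : t ∈ S), (R.graph.induce S).Reachable ⟨s, h.1⟩ ⟨t, ht⟩ := by
    intro t ht
    induction hd : R.depth t using Nat.strong_induction_on generalizing t with
    | _ n ih =>
      by_cases hts : t = s
      · subst hts
        rfl
      obtain ⟨htr, hpS⟩ := h.2 t ht hts
      have hlt : R.depth (R.parent t) < n := by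
        have := R.depth_eq t htr
        omega
      exact (ih _ hlt _ hpS rfl).trans (induce_adj.mpr (R.adj_parent htr).symm).reachable
  exact (connected_iff_exists_forall_reachable _).mpr ⟨⟨s, h.1⟩, fun t => hreach t.1 t.2⟩

variable {V : Type*}

def HasSubtreeBags (bag : T → Finset V) : Prop :=
  ∀ v, ∃ s, R.IsSubtreeWithTop {t | v ∈ bag t} s

def HasDistinctNavels [DecidableEq V] (bag : T → Finset V) : Prop :=
  ∀ a b, a ≠ r → b ≠ r → a ≠ b → R.parent a = R.parent b →
    bag a ∩ bag (R.parent a) ≠ bag b ∩ bag (R.parent b)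

open Classical in
noncomputable def reattach {a b : T} (hb : b ≠ r) (hab : a ≠ b) (hd : R.depth a = R.depth b) :
    ParentTree T r where
  parent := Function.update R.parent b a
  depth s := if R.IsAncestor b s then R.depth s + 1 else R.depth s
  parent_root := by rw [Function.update_of_ne hb.symm, R.parent_root]
  depth_root := by rw [if_neg (R.not_isAncestor_root hb), R.depth_root]
  depth_eq t ht := by
    by_cases htb : t = b
    · subst htb
      have ha : ¬ R.IsAncestor t a := fun h => by
        have := R.depth_lt_of_isAncestor h hab
        omega
      simp [R.isAncestor_self, ha, hd]
    · simp only [Function.update_of_ne htb, R.isAncestor_parent_iff htb, R.depth_eq t ht]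
      split_ifs <;> rfl

section reattach

variable {a b : T} (hb : b ≠ r) (hab : a ≠ b) (hd : R.depth a = R.depth b)

lemma sum_depth_lt_reattach [Fintype T] :
    ∑ t, R.depth t < ∑ t, (R.reattach hb hab hd).depth t := by
  refine Finset.sum_lt_sum (fun t _ => ?_) ⟨b, Finset.mem_univ b, ?_⟩ <;>
    simp only [reattach, R.isAncestor_self] <;> split_ifs <;> omega

variable {R}

lemma HasSubtreeBags.reattach [DecidableEq V] {bag : T → Finset V} (h : R.HasSubtreeBags bag)
    (hnav : bag b ∩ bag (R.parent b) ⊆ bag a) : (R.reattach hb hab hd).HasSubtreeBags bag := by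
  classical
  intro v
  obtain ⟨s, hs, hup⟩ := h v
  refine ⟨s, hs, fun t ht hts => ⟨(hup t ht hts).1, ?_⟩⟩
  by_cases htb : t = b
  · subst htb
    simpa [ParentTree.reattach] using hnav (Finset.mem_inter.mpr ⟨ht, (hup t ht hts).2⟩)
  · simpa [ParentTree.reattach, Function.update_of_ne htb] using (hup t ht hts).2

end reattach

variable {R}

lemma HasSubtreeBags.exists_sum_depth_lt [Fintype T] [DecidableEq V] {bag : T → Finset V}
    (h : R.HasSubtreeBags bag) (hnav : ¬ R.HasDistinctNavels bag) :
    ∃ R' : ParentTree T r, R'.HasSubtreeBags bag ∧ ∑ t, R.depth t < ∑ t, R'.depth t := by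
  simp only [HasDistinctNavels, not_forall, not_not] at hnav
  obtain ⟨a, b, ha, hb, hab, hpar, heq⟩ := hnav
  have hd : R.depth a = R.depth b := by rw [R.depth_eq a ha, R.depth_eq b hb, hpar]
  refine ⟨R.reattach hb hab hd, h.reattach hb hab hd ?_, R.sum_depth_lt_reattach hb hab hd⟩
  rw [← heq]
  exact Finset.inter_subset_left

lemma HasSubtreeBags.exists_hasDistinctNavels [Fintype T] [DecidableEq V]
    {bag : T → Finset V} (h : R.HasSubtreeBags bag) :
    ∃ R' : ParentTree T r, R'.HasSubtreeBags bag ∧ R'.HasDistinctNavels bag := by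
  have hbound (R' : ParentTree T r) : ∑ t, R'.depth t ≤ Fintype.card T * Fintype.card T := by
    simpa using Finset.sum_le_sum fun t (_ : t ∈ Finset.univ) => (R'.depth_lt_card t).le
  -- maximise the depth sum: `exists_sum_depth_lt` rules out a maximiser without distinct navels
  obtain ⟨⟨R', hR'⟩, -, hmax⟩ :=
    (measure fun R' : {R' : ParentTree T r // R'.HasSubtreeBags bag} =>
      Fintype.card T * Fintype.card T - ∑ t, R'.1.depth t).wf.has_min Set.univ ⟨⟨R, h⟩, trivial⟩
  refine ⟨R', hR', by_contra fun hnav => ?_⟩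
  obtain ⟨R'', hR'', hlt⟩ := hR'.exists_sum_depth_lt hnav
  refine hmax ⟨R'', hR''⟩ trivial ?_
  have := hbound R'
  have := hbound R''
  show Fintype.card T * Fintype.card T - ∑ t, R''.depth t <
    Fintype.card T * Fintype.card T - ∑ t, R'.depth t
  omega

end ParentTree

def ParentTree.HasSubtreeBags.toTreeDecomp {V T : Type} [Fintype V] [Fintype T] {r : T}
    {R : ParentTree T r} {G : SimpleGraph V} {bag : T → Finset V} (h : R.HasSubtreeBags bag)
    (edge_bag : ∀ u v, G.Adj u v → ∃ t, u ∈ bag t ∧ v ∈ bag t) : TreeDecomp G R.graph where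
  isTree := R.isTree
  bag := bag
  mem_bag v := ⟨_, (h v).choose_spec.1⟩
  edge_bag := edge_bag
  bag_connected v := (h v).choose_spec.induce_connected

theorem TreeDecomp.exists_parentTree {V T : Type} [Fintype V] [Fintype T] {G : SimpleGraph V}
    {Tg : SimpleGraph T} (td : TreeDecomp G Tg) (r : T) :
    ∃ R : ParentTree T r, R.HasSubtreeBags td.bag := by
  obtain ⟨p, hpr, hp⟩ := td.isTree.exists_parent_fun r
  refine ⟨⟨p, Tg.dist r, hpr, dist_self, fun t ht => (hp t ht).2.symm⟩, fun v => ?_⟩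
  obtain ⟨s, hs, hmin⟩ :=
    Set.exists_min_image {t | v ∈ td.bag t} (Tg.dist r) (Set.toFinite _) (td.mem_bag v)
  refine ⟨s, hs, fun t ht hts => ?_⟩
  have htr : t ≠ r := by
    rintro rfl
    have := hmin t ht
    rw [dist_self, Nat.le_zero, td.isTree.connected.dist_eq_zero_iff] at this
    exact hts this
  exact ⟨htr, td.isTree.mem_of_adj_of_dist_add_one (td.bag_connected v) hs hmin ht hts
    (hp t htr).1 (hp t htr).2⟩

/-- Given any tree decomposition `(T, β)` of `G` and a designated root `r`,
there is a tree `T'` on the same node set such that `(T', β)` is a tree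
decomposition of `G` (with the same bags, hence the same width) and, rooting
`T'` at `r`, no two distinct children of a common node have the same navel. -/
theorem exists_treeDecomp_distinct_navels {V T : Type} [Fintype V] [Fintype T]
    [DecidableEq V] (G : SimpleGraph V) (Tg : SimpleGraph T)
    (td : TreeDecomp G Tg) (r : T) :
    ∃ (Tg' : SimpleGraph T) (td' : TreeDecomp G Tg'),
      td'.bag = td.bag ∧ td'.width = td.width ∧
      ∀ t a b : T, a ≠ b →
        Tg'.Adj t a → Tg'.dist r a = Tg'.dist r t + 1 →
        Tg'.Adj t b → Tg'.dist r b = Tg'.dist r t + 1 →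
        td'.bag a ∩ td'.bag t ≠ td'.bag b ∩ td'.bag t := by
  obtain ⟨R₀, hR₀⟩ := td.exists_parentTree r
  obtain ⟨R, hR, hnav⟩ := hR₀.exists_hasDistinctNavels
  refine ⟨R.graph, hR.toTreeDecomp td.edge_bag, rfl, rfl, fun t a b hab hta hda htb hdb => ?_⟩
  rw [R.dist_eq_depth, R.dist_eq_depth] at hda hdb
  have hpa := R.parent_eq_of_adj_of_depth_lt hta (by omega)
  have hpb := R.parent_eq_of_adj_of_depth_lt htb (by omega)
  have ha := (R.ne_root_and_depth_eq_of_adj hta.symm hpa).1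
  have hb := (R.ne_root_and_depth_eq_of_adj htb.symm hpb).1
  have hnav_ab := hnav a b ha hb hab (hpa.trans hpb.symm)
  rw [hpa, hpb] at hnav_ab
  exact hnav_ab
end

section
/- Let G = (V,E) be a finite simple 3-regular graph. Consider assignments σ : E ∪ V → {0,1} (the value σ(v) for v ∈ V is interpreted as the value of the edge joining v to a new apex vertex a adjacent to all of V). Then the number of assignments σ such that (i) for every v ∈ V, exactly one of the four values σ(e₁), σ(e₂), σ(e₃), σ(v) equals 0, where e₁, e₂, e₃ are the three edges of G incident to v, and (ii) the number of vertices v ∈ V with σ(v) = 1 is even, equals the number of matchings of G. -/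
/-!
At a vertex `v` of `G`, the signature `[0,0,0,1,0]` says that exactly one of the edges at `v`
(including the apex edge) carries `0`. Hence the `0`-edges of `G` form a matching `M`, and the
apex edge at `v` is forced: it carries `1` exactly when `v` is covered by `M`. Conversely every
matching arises this way, and the even signature at the apex never cuts anything out, because
`M` covers `2 * #M` vertices (double counting of incidences).
-/

open Finset

theorem add_ite_eq_one_iff {n : ℕ} {b : Bool} :
    n + (if b = false then 1 else 0) = 1 ↔ n = b.toNat := by
  cases b <;> simp

theorem card_filter_eq_true_eq_sum_toNat {α : Type*} [Fintype α] (b : α → Bool) :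
    #{a | b a = true} = ∑ a, (b a).toNat := by
  rw [card_filter]
  exact sum_congr rfl fun a _ => by cases b a <;> rfl

theorem card_filter_eq_toNat_eq_card_filter_le_one {α ι : Type*} [Fintype α] [Fintype ι]
    [DecidableEq ι] (f : α → ι → ℕ) :
    #{σ : α × (ι → Bool) | ∀ i, f σ.1 i = (σ.2 i).toNat} = #{a | ∀ i, f a i ≤ 1} := by
  refine card_nbij' Prod.fst (fun a => (a, fun i => decide (f a i = 1))) ?_ ?_ ?_ ?_
    <;> simp only [coe_filter, mem_univ, true_and]
  · exact fun σ hσ i => hσ i ▸ Bool.toNat_le _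
  · intro a ha i
    rcases Nat.le_one_iff_eq_zero_or_eq_one.1 (ha i) with h | h <;> simp [h]
  · intro σ hσ
    refine Prod.ext rfl (funext fun i => ?_)
    change decide (f σ.1 i = 1) = σ.2 i
    rw [hσ i]
    cases σ.2 i <;> rfl
  · exact fun a _ => rfl

namespace SimpleGraph

variable {V : Type*} {G : SimpleGraph V}

section DoubleCounting

variable [Fintype V] [DecidableEq V]

theorem card_filter_mem_of_mem_edgeSet {e : Sym2 V} (he : e ∈ G.edgeSet) :
    #{v | v ∈ e} = 2 := by
  rw [← Sym2.card_toFinset_of_not_isDiag e (G.not_isDiag_of_mem_edgeSet he)]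
  congr 1
  ext v
  simp [Sym2.mem_toFinset]

variable [Fintype G.edgeSet]

theorem sum_card_filter_mem_eq_two_mul_card (p : G.edgeSet → Prop) [DecidablePred p] :
    ∑ v, #{e : G.edgeSet | v ∈ (e : Sym2 V) ∧ p e} = 2 * #{e | p e} := by
  have hcount := sum_card_bipartiteAbove_eq_sum_card_bipartiteBelow
    (fun v (e : G.edgeSet) => v ∈ (e : Sym2 V)) (s := univ) (t := {e | p e})
  simp only [bipartiteAbove, bipartiteBelow, filter_filter, and_comm (a := p _)] at hcount
  rw [hcount, sum_congr rfl fun e _ => card_filter_mem_of_mem_edgeSet e.2, sum_const, smul_eq_mul,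
    mul_comm]

theorem even_card_filter_of_card_incident_zero_eq_toNat {τ : G.edgeSet → Bool} {ν : V → Bool}
    (h : ∀ v, #{e : G.edgeSet | v ∈ (e : Sym2 V) ∧ τ e = false} = (ν v).toNat) :
    Even #{v | ν v = true} := by
  rw [card_filter_eq_true_eq_sum_toNat, ← sum_congr rfl fun v _ => h v,
    sum_card_filter_mem_eq_two_mul_card]
  exact even_two_mul _

end DoubleCounting

variable [Fintype G.edgeSet]

variable (G) in
def zeroEdges (τ : G.edgeSet → Bool) : Finset (Sym2 V) :=
  ({e | τ e = false} : Finset G.edgeSet).map (Function.Embedding.subtype _)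

theorem mem_zeroEdges {τ : G.edgeSet → Bool} {e : Sym2 V} :
    e ∈ G.zeroEdges τ ↔ ∃ h : e ∈ G.edgeSet, τ ⟨e, h⟩ = false := by
  simp [zeroEdges]

variable [DecidableEq V]

theorem card_incident_zero_le_one_iff_pairwise (τ : G.edgeSet → Bool) :
    (∀ v, #{e : G.edgeSet | v ∈ (e : Sym2 V) ∧ τ e = false} ≤ 1) ↔
      (G.zeroEdges τ : Set (Sym2 V)).Pairwise fun e e' => ∀ v, ¬(v ∈ e ∧ v ∈ e') := by
  simp only [card_le_one, mem_filter, mem_univ, true_and]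
  constructor
  · rintro h e he e' he' hne v ⟨hv, hv'⟩
    obtain ⟨he, hτ⟩ := mem_zeroEdges.1 he
    obtain ⟨he', hτ'⟩ := mem_zeroEdges.1 he'
    exact hne (congrArg Subtype.val (h v ⟨e, he⟩ ⟨hv, hτ⟩ ⟨e', he'⟩ ⟨hv', hτ'⟩))
  · rintro h v a ⟨hva, ha⟩ b ⟨hvb, hb⟩
    refine Subtype.ext (h.eq ?_ ?_ fun hab => hab v ⟨hva, hvb⟩)
    · exact mem_zeroEdges.2 ⟨a.2, ha⟩
    · exact mem_zeroEdges.2 ⟨b.2, hb⟩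

theorem decide_notMem_zeroEdges (τ : G.edgeSet → Bool) :
    (fun e : G.edgeSet => decide ((e : Sym2 V) ∉ G.zeroEdges τ)) = τ := by
  funext e
  cases h : τ e <;> simp [mem_zeroEdges, h]

theorem zeroEdges_decide_notMem {M : Finset (Sym2 V)} (hM : ↑M ⊆ G.edgeSet) :
    G.zeroEdges (fun e => decide ((e : Sym2 V) ∉ M)) = M := by
  ext e
  simp only [mem_zeroEdges, decide_eq_false_iff_not, not_not]
  exact ⟨fun ⟨_, h⟩ => h, fun h => ⟨hM h, h⟩⟩

open scoped Classical in
theorem card_edgeLabelings_eq_card_matchings [Fintype V] :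
    #{τ : G.edgeSet → Bool | ∀ v, #{e : G.edgeSet | v ∈ (e : Sym2 V) ∧ τ e = false} ≤ 1} =
      #{M : Finset (Sym2 V) | ↑M ⊆ G.edgeSet ∧
        (M : Set (Sym2 V)).Pairwise fun e e' => ∀ v, ¬(v ∈ e ∧ v ∈ e')} := by
  refine card_nbij' G.zeroEdges (fun M e => decide ((e : Sym2 V) ∉ M)) ?_ ?_ ?_ ?_
    <;> simp only [coe_filter, mem_univ, true_and]
  · intro τ hτ
    refine ⟨fun e he => ?_, (card_incident_zero_le_one_iff_pairwise τ).1 hτ⟩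
    exact (mem_zeroEdges.1 he).1
  · rintro M ⟨hM, hpair⟩
    exact (card_incident_zero_le_one_iff_pairwise _).2 (by rwa [zeroEdges_decide_notMem hM])
  · exact fun τ _ => decide_notMem_zeroEdges τ
  · exact fun M hM => zeroEdges_decide_notMem hM.1

end SimpleGraph

open scoped Classical in
theorem apex_holant_eq_matchings_general {V : Type} [Fintype V] (G : SimpleGraph V) :
    (Finset.univ.filter fun σ : (G.edgeSet → Bool) × (V → Bool) =>
        (∀ v : V,
          (Finset.univ.filter
              fun e : G.edgeSet => v ∈ (e : Sym2 V) ∧ σ.1 e = false).card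
            + (if σ.2 v = false then 1 else 0) = 1) ∧
        Even (Finset.univ.filter fun v : V => σ.2 v = true).card).card
      = (Finset.univ.filter fun M : Finset (Sym2 V) =>
          ↑M ⊆ G.edgeSet ∧
            ∀ e ∈ M, ∀ e' ∈ M, e ≠ e' → ∀ v : V, ¬(v ∈ e ∧ v ∈ e')).card := by
  calc _ = #{σ : (G.edgeSet → Bool) × (V → Bool) |
          ∀ v, #{e : G.edgeSet | v ∈ (e : Sym2 V) ∧ σ.1 e = false} = (σ.2 v).toNat} := by
        congr 1
        ext σ
        simp only [mem_filter, mem_univ, true_and, add_ite_eq_one_iff, and_iff_left_iff_imp]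
        exact G.even_card_filter_of_card_incident_zero_eq_toNat
    _ = #{τ : G.edgeSet → Bool |
          ∀ v, #{e : G.edgeSet | v ∈ (e : Sym2 V) ∧ τ e = false} ≤ 1} :=
        card_filter_eq_toNat_eq_card_filter_le_one fun (τ : G.edgeSet → Bool) v =>
          #{e : G.edgeSet | v ∈ (e : Sym2 V) ∧ τ e = false}
    _ = _ := by
        convert G.card_edgeLabelings_eq_card_matchings using 3
        exact Iff.rfl

open scoped Classical in
/-- For a finite simple 3-regular graph `G`, the number of assignments
`σ : E ∪ V → {0,1}` (the value on a vertex `v` being the value of the edge from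
`v` to a new apex vertex) such that (i) at every vertex exactly one of its four
values is `0`, and (ii) the number of vertices with `σ`-value `1` is even,
equals the number of matchings of `G`. -/
theorem apex_holant_eq_matchings {V : Type} [Fintype V] (G : SimpleGraph V)
    (hreg : G.IsRegularOfDegree 3) :
    (Finset.univ.filter fun σ : (G.edgeSet → Bool) × (V → Bool) =>
        (∀ v : V,
          (Finset.univ.filter
              fun e : G.edgeSet => v ∈ (e : Sym2 V) ∧ σ.1 e = false).card
            + (if σ.2 v = false then 1 else 0) = 1) ∧
        Even (Finset.univ.filter fun v : V => σ.2 v = true).card).card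
      = (Finset.univ.filter fun M : Finset (Sym2 V) =>
          ↑M ⊆ G.edgeSet ∧
            ∀ e ∈ M, ∀ e' ∈ M, e ≠ e' → ∀ v : V, ¬(v ∈ e ∧ v ∈ e')).card :=
  apex_holant_eq_matchings_general G
end

section
/- Let s ∈ ℂ with s ≠ 0, let ε ∈ {0,1}, and let k ≥ 2 and 1 ≤ q ≤ k−1 be integers. Define f : {0,1}^k → ℂ by f(γ) = s^{HW(γ)} if HW(γ) ≡ ε (mod 2) and f(γ) = 0 otherwise, and for each m ≥ 1 define g_m : {0,1} × {0,1}^m → ℂ by g_m(b,γ) = s^{HW(γ)} if HW(γ) + b ≡ ε (mod 2) and g_m(b,γ) = 0 otherwise. Then for all α ∈ {0,1}^q and β ∈ {0,1}^{k−q}, f(αβ) = g_{k−q}(HW(α) mod 2, β) · g_q(HW(β) mod 2, α), where αβ denotes the concatenation of α and β. -/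
/-- The symmetric signature `f` of arity `k` with `f(γ) = s^{HW(γ)}` when
`HW(γ) ≡ ε (mod 2)` and `f(γ) = 0` otherwise. -/
noncomputable def symSig (s : ℂ) (ε : ZMod 2) (k : ℕ) : (Fin k → Fin 2) → ℂ :=
  fun γ => if ((∑ i : Fin k, (γ i : ℕ) : ℕ) : ZMod 2) = ε
    then s ^ (∑ i : Fin k, (γ i : ℕ)) else 0

/-- The information signature `g_m` of arity `m + 1`:
`g_m(b,γ) = s^{HW(γ)}` when `HW(γ) + b ≡ ε (mod 2)` and `0` otherwise. -/
noncomputable def infoSig (s : ℂ) (ε : ZMod 2) (m : ℕ) :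
    ZMod 2 → (Fin m → Fin 2) → ℂ :=
  fun b γ => if ((∑ i : Fin m, (γ i : ℕ) : ℕ) : ZMod 2) + b = ε
    then s ^ (∑ i : Fin m, (γ i : ℕ)) else 0

/-- The value of the symmetric signature on a split input is the product of the
two information signatures evaluated with the information bits of the
complementary halves. -/
theorem symSig_eq_infoSig_mul_infoSig (s : ℂ) (hs : s ≠ 0) (ε : ZMod 2)
    (k q : ℕ) (hk : 2 ≤ k) (hq1 : 1 ≤ q) (hq2 : q ≤ k - 1)
    (α : Fin q → Fin 2) (β : Fin (k - q) → Fin 2) :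
    symSig s ε k
        (fun i : Fin k =>
          Fin.append α β
            (Fin.cast ((Nat.add_sub_cancel' (hq2.trans (Nat.sub_le k 1))).symm) i))
      = infoSig s ε (k - q) (((∑ i : Fin q, (α i : ℕ) : ℕ) : ZMod 2)) β *
        infoSig s ε q (((∑ i : Fin (k - q), (β i : ℕ) : ℕ) : ZMod 2)) α := by
  have hsum : (∑ i : Fin k, ((Fin.append α β
      (Fin.cast ((Nat.add_sub_cancel' (hq2.trans (Nat.sub_le k 1))).symm) i) : Fin 2) : ℕ))
      = (∑ i : Fin q, (α i : ℕ)) + ∑ i : Fin (k - q), (β i : ℕ) := by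
    rw [show (∑ i : Fin k, ((Fin.append α β
        (Fin.cast ((Nat.add_sub_cancel' (hq2.trans (Nat.sub_le k 1))).symm) i) : Fin 2) : ℕ))
        = ∑ i : Fin (q + (k - q)), ((Fin.append α β i : Fin 2) : ℕ) from
      Fintype.sum_equiv (finCongr ((Nat.add_sub_cancel' (hq2.trans (Nat.sub_le k 1))).symm))
        _ _ (fun i => rfl), Fin.sum_univ_add]
    simp
  set A := ∑ i : Fin q, (α i : ℕ)
  set B := ∑ i : Fin (k - q), (β i : ℕ)
  simp only [symSig, infoSig, hsum]
  by_cases h : ((A + B : ℕ) : ZMod 2) = ε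
  · rw [if_pos h, if_pos, if_pos]
    · rw [pow_add, mul_comm]
    · rwa [← Nat.cast_add]
    · rwa [← Nat.cast_add, Nat.add_comm]
  · rw [if_neg h, if_neg, zero_mul]
    intro hc; exact h (by rwa [← Nat.cast_add, Nat.add_comm] at hc)
end
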